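/- arXiv:1610.02413 — 6 statements merged into one kernel-verified Lean document; each statement's English description precedes it below -/
import Mathlib

section
/- Let Ŷ, A, Y be {0,1}-valued random variables with every event {Ŷ=ŷ, A=a, Y=y} of positive probability, and let Ỹ be a {0,1}-valued random variable such that P(Ỹ=1 | Ŷ=ŷ, A=a, Y=y) = p_{ŷ,a} for all y ∈ {0,1}, where p_{ŷ,a} ∈ [0,1] are four parameters (this encodes that Ỹ is a possibly randomized function of (Ŷ, A) alone). Then for each a ∈ {0,1} and y ∈ {0,1}: P(Ỹ=1 | A=a, Y=y) = p_{1,a}·P(Ŷ=1 | A=a, Y=y) + p_{0,a}·(1 − P(Ŷ=1 | A=a, Y=y)); consequently γ_a(Ỹ) = p_{1,a}·γ_a(Ŷ) + p_{0,a}·((1,1) − γ_a(Ŷ)), which lies in the convex hull of the four points (0,0), γ_a(Ŷ), (1,1) − γ_a(Ŷ), and (1,1) in ℝ². -/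
/-!
Conditioning on the group `{A = a, Y = y}` and splitting it along `Ŷ`, the law of total
probability writes `P(Ỹ = 1 | A = a, Y = y)` as `P(Ỹ = 1 | Ŷ = 1, A = a, Y = y) · γ + P(Ỹ = 1 | Ŷ = 0,
A = a, Y = y) · (1 - γ)` with `γ = P(Ŷ = 1 | A = a, Y = y)`, and for a derived predictor the two
cell probabilities are `p 1 a` and `p 0 a` whatever `y` is. Hence `γ_a(Ỹ) = p 1 a • u + p 0 a • v`
with `u = γ_a(Ŷ)` and `v = (1,1) - u`, and a combination of `u` and `v` with coefficients in `[0,1]`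
lies in `[0, u] + [0, v] = conv {0, u} + conv {0, v} = conv {0, u, v, u + v}`.
-/

open MeasureTheory ProbabilityTheory Set Pointwise

section Parallelogram

variable {R E : Type*} [Field R] [LinearOrder R] [IsStrictOrderedRing R] [AddCommGroup E]
  [Module R E]

theorem smul_add_smul_mem_convexHull_parallelogram {x y : E} {a b : R}
    (ha : a ∈ Icc (0 : R) 1) (hb : b ∈ Icc (0 : R) 1) :
    a • x + b • y ∈ convexHull R ({0, x, y, x + y} : Set E) := by
  have hsum : ({0, x} : Set E) + ({0, y} : Set E) = {0, x, y, x + y} := by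
    ext z; simp [mem_add]; aesop
  rw [← hsum, convexHull_add, convexHull_pair, convexHull_pair]
  exact add_mem_add ⟨1 - a, a, sub_nonneg.2 ha.2, ha.1, by ring, by simp⟩
    ⟨1 - b, b, sub_nonneg.2 hb.2, hb.1, by ring, by simp⟩

end Parallelogram

namespace ProbabilityTheory

variable {Ω : Type*} [MeasurableSpace Ω] {μ : Measure Ω} [IsFiniteMeasure μ] {s t : Set Ω}

theorem cond_eq_cond_inter_mul_add_cond_inter_compl_mul (hs : MeasurableSet s)
    (ht : MeasurableSet t) (u : Set Ω) :
    μ[u | s] = μ[u | s ∩ t] * μ[t | s] + μ[u | s ∩ tᶜ] * μ[tᶜ | s] := by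
  rw [← cond_cond_eq_cond_inter hs ht, ← cond_cond_eq_cond_inter hs ht.compl,
    cond_add_cond_compl_eq ht]

theorem condReal_eq_condReal_inter_mul_add (hs : MeasurableSet s) (ht : MeasurableSet t)
    (u : Set Ω) :
    μ[|s].real u =
      μ[|s ∩ t].real u * μ[|s].real t + μ[|s ∩ tᶜ].real u * (1 - μ[|s].real t) := by
  obtain hμs | hμs := eq_or_ne (μ s) 0
  · have hμst : μ (s ∩ tᶜ) = 0 := measure_mono_null inter_subset_left hμs
    simp [cond_eq_zero_of_meas_eq_zero hμs, cond_eq_zero_of_meas_eq_zero hμst]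
  have := cond_isProbabilityMeasure (μ := μ) hμs
  rw [← probReal_compl_eq_one_sub ht]
  simp only [measureReal_def]
  rw [cond_eq_cond_inter_mul_add_cond_inter_compl_mul hs ht u,
    ENNReal.toReal_add (by finiteness) (by finiteness), ENNReal.toReal_mul, ENNReal.toReal_mul]

end ProbabilityTheory

theorem derived_predictor_rates_mem_convexHull_general
    {Ω : Type*} [MeasurableSpace Ω] (μ : Measure Ω) [IsProbabilityMeasure μ]
    (Yh A Y Yt : Ω → Bool)
    (hYh : Measurable Yh) (hA : Measurable A) (hY : Measurable Y)
    (p : Bool → Bool → ℝ) (hp : ∀ yh a : Bool, p yh a ∈ Set.Icc (0:ℝ) 1)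
    (hder : ∀ yh a y : Bool,
      (μ[|{ω | Yh ω = yh ∧ A ω = a ∧ Y ω = y}] {ω | Yt ω = true}).toReal = p yh a) :
    ∀ a : Bool,
      (∀ y : Bool,
        (μ[|{ω | A ω = a ∧ Y ω = y}] {ω | Yt ω = true}).toReal =
          p true a * (μ[|{ω | A ω = a ∧ Y ω = y}] {ω | Yh ω = true}).toReal +
            p false a * (1 - (μ[|{ω | A ω = a ∧ Y ω = y}] {ω | Yh ω = true}).toReal)) ∧
      ((((μ[|{ω | A ω = a ∧ Y ω = false}] {ω | Yt ω = true}).toReal,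
          (μ[|{ω | A ω = a ∧ Y ω = true}] {ω | Yt ω = true}).toReal) : ℝ × ℝ) =
        p true a • (((μ[|{ω | A ω = a ∧ Y ω = false}] {ω | Yh ω = true}).toReal,
            (μ[|{ω | A ω = a ∧ Y ω = true}] {ω | Yh ω = true}).toReal) : ℝ × ℝ) +
          p false a • (((1:ℝ),(1:ℝ)) -
            (((μ[|{ω | A ω = a ∧ Y ω = false}] {ω | Yh ω = true}).toReal,
              (μ[|{ω | A ω = a ∧ Y ω = true}] {ω | Yh ω = true}).toReal) : ℝ × ℝ))) ∧
      ((((μ[|{ω | A ω = a ∧ Y ω = false}] {ω | Yt ω = true}).toReal,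
          (μ[|{ω | A ω = a ∧ Y ω = true}] {ω | Yt ω = true}).toReal) : ℝ × ℝ) ∈
        convexHull ℝ
          ({((0:ℝ),(0:ℝ)),
            (((μ[|{ω | A ω = a ∧ Y ω = false}] {ω | Yh ω = true}).toReal,
              (μ[|{ω | A ω = a ∧ Y ω = true}] {ω | Yh ω = true}).toReal) : ℝ × ℝ),
            (((1:ℝ),(1:ℝ)) -
              (((μ[|{ω | A ω = a ∧ Y ω = false}] {ω | Yh ω = true}).toReal,
                (μ[|{ω | A ω = a ∧ Y ω = true}] {ω | Yh ω = true}).toReal) : ℝ × ℝ)),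
            ((1:ℝ),(1:ℝ))} : Set (ℝ × ℝ))) := by
  intro a
  have hcell : ∀ (y yh : Bool), {ω | A ω = a ∧ Y ω = y} ∩ {ω | Yh ω = yh} =
      {ω | Yh ω = yh ∧ A ω = a ∧ Y ω = y} := fun y yh => by ext; simp [and_comm]
  have hcompl : {ω | Yh ω = true}ᶜ = {ω | Yh ω = false} := by ext; simp
  have rate : ∀ y : Bool,
      (μ[|{ω | A ω = a ∧ Y ω = y}] {ω | Yt ω = true}).toReal =
        p true a * (μ[|{ω | A ω = a ∧ Y ω = y}] {ω | Yh ω = true}).toReal +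
          p false a * (1 - (μ[|{ω | A ω = a ∧ Y ω = y}] {ω | Yh ω = true}).toReal) := fun y => by
    have h := condReal_eq_condReal_inter_mul_add (μ := μ) (s := {ω | A ω = a ∧ Y ω = y})
      (t := {ω | Yh ω = true})
      ((hA (measurableSet_singleton a)).inter (hY (measurableSet_singleton y)))
      (hYh (measurableSet_singleton true)) {ω | Yt ω = true}
    simp only [measureReal_def] at h
    rw [hcompl, hcell, hcell, hder, hder] at h
    linear_combination h
  set γ : ℝ × ℝ := ((μ[|{ω | A ω = a ∧ Y ω = false}] {ω | Yh ω = true}).toReal,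
    (μ[|{ω | A ω = a ∧ Y ω = true}] {ω | Yh ω = true}).toReal)
  have gamma : _ = p true a • γ + p false a • ((1, 1) - γ) :=
    (congrArg₂ Prod.mk (rate false) (rate true)).trans (by ext <;> simp [γ])
  refine ⟨rate, gamma, ?_⟩
  rw [gamma]
  have hmem := smul_add_smul_mem_convexHull_parallelogram (x := γ) (y := (1, 1) - γ)
    (hp true a) (hp false a)
  rwa [add_sub_cancel] at hmem

/-- If `Ỹ` is a derived predictor with parameters
`p ŷ a = P(Ỹ=1 ∣ Ŷ=ŷ, A=a, Y=y)` (independent of `y`), then its group-conditional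
rates satisfy
`P(Ỹ=1 ∣ A=a, Y=y) = p 1 a · P(Ŷ=1 ∣ A=a, Y=y) + p 0 a · (1 − P(Ŷ=1 ∣ A=a, Y=y))`,
hence `γ_a(Ỹ) = p 1 a • γ_a(Ŷ) + p 0 a • ((1,1) − γ_a(Ŷ))`, which lies in the convex
hull of `(0,0)`, `γ_a(Ŷ)`, `(1,1) − γ_a(Ŷ)` and `(1,1)`. -/
theorem derived_predictor_rates_mem_convexHull
    {Ω : Type*} [MeasurableSpace Ω] (μ : Measure Ω) [IsProbabilityMeasure μ]
    (Yh A Y Yt : Ω → Bool)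
    (hYh : Measurable Yh) (hA : Measurable A) (hY : Measurable Y) (hYt : Measurable Yt)
    (hpos : ∀ yh a y : Bool, μ {ω | Yh ω = yh ∧ A ω = a ∧ Y ω = y} ≠ 0)
    (p : Bool → Bool → ℝ) (hp : ∀ yh a : Bool, p yh a ∈ Set.Icc (0:ℝ) 1)
    (hder : ∀ yh a y : Bool,
      (μ[|{ω | Yh ω = yh ∧ A ω = a ∧ Y ω = y}] {ω | Yt ω = true}).toReal = p yh a) :
    ∀ a : Bool,
      (∀ y : Bool,
        (μ[|{ω | A ω = a ∧ Y ω = y}] {ω | Yt ω = true}).toReal =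
          p true a * (μ[|{ω | A ω = a ∧ Y ω = y}] {ω | Yh ω = true}).toReal +
            p false a * (1 - (μ[|{ω | A ω = a ∧ Y ω = y}] {ω | Yh ω = true}).toReal)) ∧
      ((((μ[|{ω | A ω = a ∧ Y ω = false}] {ω | Yt ω = true}).toReal,
          (μ[|{ω | A ω = a ∧ Y ω = true}] {ω | Yt ω = true}).toReal) : ℝ × ℝ) =
        p true a • (((μ[|{ω | A ω = a ∧ Y ω = false}] {ω | Yh ω = true}).toReal,
            (μ[|{ω | A ω = a ∧ Y ω = true}] {ω | Yh ω = true}).toReal) : ℝ × ℝ) +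
          p false a • (((1:ℝ),(1:ℝ)) -
            (((μ[|{ω | A ω = a ∧ Y ω = false}] {ω | Yh ω = true}).toReal,
              (μ[|{ω | A ω = a ∧ Y ω = true}] {ω | Yh ω = true}).toReal) : ℝ × ℝ))) ∧
      ((((μ[|{ω | A ω = a ∧ Y ω = false}] {ω | Yt ω = true}).toReal,
          (μ[|{ω | A ω = a ∧ Y ω = true}] {ω | Yt ω = true}).toReal) : ℝ × ℝ) ∈
        convexHull ℝ
          ({((0:ℝ),(0:ℝ)),
            (((μ[|{ω | A ω = a ∧ Y ω = false}] {ω | Yh ω = true}).toReal,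
              (μ[|{ω | A ω = a ∧ Y ω = true}] {ω | Yh ω = true}).toReal) : ℝ × ℝ),
            (((1:ℝ),(1:ℝ)) -
              (((μ[|{ω | A ω = a ∧ Y ω = false}] {ω | Yh ω = true}).toReal,
                (μ[|{ω | A ω = a ∧ Y ω = true}] {ω | Yh ω = true}).toReal) : ℝ × ℝ)),
            ((1:ℝ),(1:ℝ))} : Set (ℝ × ℝ))) :=
  derived_predictor_rates_mem_convexHull_general μ Yh A Y Yt hYh hA hY p hp hder
end

section
/- Let γ ∈ [0,1]² be a point in the plane. Then every point q of the convex hull of {(0,0), γ, (1,1)−γ, (1,1)} in ℝ² can be written as q = α·γ + β·((1,1)−γ) for some α, β ∈ [0,1]. Consequently, for a binary predictor Ŷ with γ_a(Ŷ) = γ, every point of the polytope P_a(Ŷ) := convhull{(0,0), γ_a(Ŷ), γ_a(1−Ŷ), (1,1)} is realized as γ_a(Ỹ) of a derived predictor Ỹ with parameters p_{1,a} = α and p_{0,a} = β. -/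
open Set Pointwise

section Parallelogram

variable {𝕜 E : Type*} [Field 𝕜] [LinearOrder 𝕜] [IsStrictOrderedRing 𝕜]
  [AddCommGroup E] [Module 𝕜 E]

theorem convexHull_parallelogram (u v : E) :
    convexHull 𝕜 {0, u, v, u + v} = segment 𝕜 0 u + segment 𝕜 0 v := by
  have hvertices : ({0, u, v, u + v} : Set E) = {0, u} + {0, v} := by
    ext
    simp only [mem_insert_iff, mem_singleton_iff, mem_add, exists_eq_or_imp, add_zero,
      existsAndEq, true_and, zero_add]
    aesop
  rw [hvertices, convexHull_add, convexHull_pair, convexHull_pair]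

theorem mem_segment_zero_iff {u x : E} : x ∈ segment 𝕜 0 u ↔ ∃ α ∈ Icc (0 : 𝕜) 1, α • u = x := by
  simp [segment_eq_image']

theorem exists_smul_add_smul_of_mem_convexHull_parallelogram {u v q : E}
    (hq : q ∈ convexHull 𝕜 {0, u, v, u + v}) :
    ∃ α β : 𝕜, α ∈ Icc 0 1 ∧ β ∈ Icc 0 1 ∧ q = α • u + β • v := by
  rw [convexHull_parallelogram] at hq
  obtain ⟨x, hx, y, hy, rfl⟩ := hq
  obtain ⟨α, hα, rfl⟩ := mem_segment_zero_iff.1 hx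
  obtain ⟨β, hβ, rfl⟩ := mem_segment_zero_iff.1 hy
  exact ⟨α, β, hα, hβ, rfl⟩

end Parallelogram

theorem convexHull_polytope_eq_derived_rates_general
    (γ : ℝ × ℝ)
    (q : ℝ × ℝ)
    (hq : q ∈ convexHull ℝ
      ({((0:ℝ),(0:ℝ)), γ, (((1:ℝ),(1:ℝ)) - γ), ((1:ℝ),(1:ℝ))} : Set (ℝ × ℝ))) :
    ∃ α β : ℝ, α ∈ Set.Icc (0:ℝ) 1 ∧ β ∈ Set.Icc (0:ℝ) 1 ∧
      q = α • γ + β • (((1:ℝ),(1:ℝ)) - γ) := by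
  apply exists_smul_add_smul_of_mem_convexHull_parallelogram
  rwa [add_sub_cancel, Prod.zero_eq_mk]

/-- For `γ ∈ [0,1]²`, every point of the convex hull of
`{(0,0), γ, (1,1) − γ, (1,1)}` can be written as `α • γ + β • ((1,1) − γ)` with
`α, β ∈ [0,1]`; i.e. every point of the polytope `P_a(Ŷ)` is realized as `γ_a(Ỹ)` of a
derived predictor with parameters `p_{1,a} = α`, `p_{0,a} = β`. -/
theorem convexHull_polytope_eq_derived_rates
    (γ : ℝ × ℝ) (hγ1 : γ.1 ∈ Set.Icc (0:ℝ) 1) (hγ2 : γ.2 ∈ Set.Icc (0:ℝ) 1)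
    (q : ℝ × ℝ)
    (hq : q ∈ convexHull ℝ
      ({((0:ℝ),(0:ℝ)), γ, (((1:ℝ),(1:ℝ)) - γ), ((1:ℝ),(1:ℝ))} : Set (ℝ × ℝ))) :
    ∃ α β : ℝ, α ∈ Set.Icc (0:ℝ) 1 ∧ β ∈ Set.Icc (0:ℝ) 1 ∧
      q = α • γ + β • (((1:ℝ),(1:ℝ)) - γ) :=
  convexHull_polytope_eq_derived_rates_general γ q hq
end

section
/- Let (Ω, ℱ, P) be a probability space, Y a {0,1}-valued random variable, and X, A random variables taking values in measurable spaces. Let R be a version of the conditional expectation E[Y | σ(X, A)] (the Bayes optimal regressor). Then Y is conditionally independent of σ(X, A) given the σ-algebra σ(R, A); that is, for every event B ∈ σ(X, A), P({Y=1} ∩ B | σ(R, A)) = P(Y=1 | σ(R, A)) · P(B | σ(R, A)) almost surely. -/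
open MeasureTheory ProbabilityTheory
open scoped ENNReal

/-- The σ-algebra generated by a pair of random variables. -/
def pairSigma {Ω β γ : Type*} [MeasurableSpace β] [MeasurableSpace γ]
    (X : Ω → β) (A : Ω → γ) : MeasurableSpace Ω :=
  MeasurableSpace.comap (fun ω => (X ω, A ω)) inferInstance

/-- Let `Y` be a `{0,1}`-valued random variable and `R` a version of
the conditional expectation `E[Y ∣ σ(X,A)]` (the Bayes optimal regressor). Then `Y` is
conditionally independent of `σ(X,A)` given `σ(R,A)`: for every `B ∈ σ(X,A)`,
`P({Y=1} ∩ B ∣ σ(R,A)) = P(Y=1 ∣ σ(R,A)) · P(B ∣ σ(R,A))` almost surely. -/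
theorem bayes_regressor_condIndep
    {Ω β : Type*} [MeasurableSpace Ω] [MeasurableSpace β]
    (μ : Measure Ω) [IsProbabilityMeasure μ]
    (Y : Ω → ℝ) (X : Ω → β) (A : Ω → Bool) (R : Ω → ℝ)
    (hY : Measurable Y) (hY01 : ∀ ω, Y ω = 0 ∨ Y ω = 1)
    (hX : Measurable X) (hA : Measurable A)
    (hRmeas : Measurable[pairSigma X A] R)
    (hR : R =ᵐ[μ] μ[Y | pairSigma X A]) :
    ∀ B : Set Ω, MeasurableSet[pairSigma X A] B →
      (μ[Set.indicator ({ω | Y ω = 1} ∩ B) (fun _ => (1:ℝ)) | pairSigma R A]) =ᵐ[μ]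
        fun ω =>
          (μ[Set.indicator {ω' | Y ω' = 1} (fun _ => (1:ℝ)) | pairSigma R A]) ω *
            (μ[Set.indicator B (fun _ => (1:ℝ)) | pairSigma R A]) ω := by
  intro B hB
  -- basic measurability facts
  have hXA : Measurable (fun ω => (X ω, A ω)) := hX.prodMk hA
  have hm₁ : pairSigma X A ≤ _ := measurable_iff_comap_le.mp hXA
  have hAm₁ : Measurable[pairSigma X A] A := by
    have h : Measurable[pairSigma X A] (fun ω => (X ω, A ω)) := comap_measurable _
    exact measurable_snd.comp h
  have hm₂₁ : pairSigma R A ≤ pairSigma X A :=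
    measurable_iff_comap_le.mp (hRmeas.prodMk hAm₁)
  have hm₂ : pairSigma R A ≤ _ := hm₂₁.trans hm₁
  have hRm₂ : Measurable[pairSigma R A] R := by
    have h : Measurable[pairSigma R A] (fun ω => (R ω, A ω)) := comap_measurable _
    exact measurable_fst.comp h
  -- Y is the indicator of {Y = 1}
  have hYind : Set.indicator {ω' | Y ω' = 1} (fun _ => (1:ℝ)) = Y := by
    funext ω
    rcases hY01 ω with h | h <;>
      simp [Set.indicator_apply, Set.mem_setOf_eq, h]
  have hSB : Set.indicator ({ω | Y ω = 1} ∩ B) (fun _ => (1:ℝ))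
      = fun ω => Set.indicator B (fun _ => (1:ℝ)) ω * Y ω := by
    funext ω
    rcases hY01 ω with h | h <;> by_cases hω : ω ∈ B <;>
      simp [Set.indicator_apply, Set.mem_setOf_eq, h, hω]
  have hBmeas : MeasurableSet B := hm₁ _ hB
  have hSmeas : MeasurableSet {ω | Y ω = 1} := hY (measurableSet_singleton 1)
  have hYint : Integrable Y μ := hYind ▸ (integrable_const (1:ℝ)).indicator hSmeas
  have hRint : Integrable R μ := (integrable_condExp).congr hR.symm
  have hBind₁ : StronglyMeasurable[pairSigma X A] (Set.indicator B fun _ => (1:ℝ)) :=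
    stronglyMeasurable_const.indicator hB
  have hprod_int : Integrable (fun ω => Set.indicator B (fun _ => (1:ℝ)) ω * Y ω) μ := by
    rw [← hSB]; exact (integrable_const (1:ℝ)).indicator (hSmeas.inter hBmeas)
  have hRB_eq : (fun ω => R ω * Set.indicator B (fun _ => (1:ℝ)) ω) = B.indicator R := by
    funext ω; by_cases hω : ω ∈ B <;> simp [Set.indicator_apply, hω]
  have hRBint : Integrable (fun ω => R ω * Set.indicator B (fun _ => (1:ℝ)) ω) μ := by
    rw [hRB_eq]; exact hRint.indicator hBmeas
  have hBint : Integrable (Set.indicator B fun _ => (1:ℝ)) μ :=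
    (integrable_const (1:ℝ)).indicator hBmeas
  -- Step 1: inner conditional expectation wrt σ(X,A)
  have step1 : μ[(fun ω => Set.indicator B (fun _ => (1:ℝ)) ω * Y ω) | pairSigma X A]
      =ᵐ[μ] fun ω => R ω * Set.indicator B (fun _ => (1:ℝ)) ω := by
    have h := condExp_mul_of_stronglyMeasurable_left hBind₁ hprod_int hYint
    refine h.trans ?_
    filter_upwards [hR] with ω hω
    simp [Pi.mul_apply, ← hω, mul_comm]
  -- Step 2: LHS via the tower property
  have tower : μ[μ[(fun ω => Set.indicator B (fun _ => (1:ℝ)) ω * Y ω) | pairSigma X A]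
        | pairSigma R A]
      =ᵐ[μ] μ[(fun ω => Set.indicator B (fun _ => (1:ℝ)) ω * Y ω) | pairSigma R A] :=
    condExp_condExp_of_le hm₂₁ hm₁
  have lhs1 : μ[Set.indicator ({ω | Y ω = 1} ∩ B) (fun _ => (1:ℝ)) | pairSigma R A]
      =ᵐ[μ] μ[(fun ω => R ω * Set.indicator B (fun _ => (1:ℝ)) ω) | pairSigma R A] := by
    rw [hSB]
    exact tower.symm.trans (condExp_congr_ae step1)
  -- Step 3: pull out the σ(R,A)-measurable factor R
  have pullout : μ[(fun ω => R ω * Set.indicator B (fun _ => (1:ℝ)) ω) | pairSigma R A]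
      =ᵐ[μ] fun ω => R ω * (μ[Set.indicator B (fun _ => (1:ℝ)) | pairSigma R A]) ω :=
    condExp_mul_of_stronglyMeasurable_left hRm₂.stronglyMeasurable hRBint hBint
  -- Step 4: the first factor of the RHS equals R a.e.
  have fact1 : μ[Set.indicator {ω' | Y ω' = 1} (fun _ => (1:ℝ)) | pairSigma R A] =ᵐ[μ] R := by
    rw [hYind]
    have tY : μ[μ[Y | pairSigma X A] | pairSigma R A] =ᵐ[μ] μ[Y | pairSigma R A] :=
      condExp_condExp_of_le hm₂₁ hm₁
    have h1 : μ[Y | pairSigma R A] =ᵐ[μ] μ[R | pairSigma R A] :=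
      tY.symm.trans (condExp_congr_ae hR.symm)
    have h2 : μ[R | pairSigma R A] = R :=
      condExp_of_stronglyMeasurable hm₂ hRm₂.stronglyMeasurable hRint
    exact h1.trans (by rw [h2])
  -- assemble
  refine (lhs1.trans pullout).trans ?_
  filter_upwards [fact1] with ω hω
  rw [hω]
end

section
/- Let Y, A be {0,1}-valued random variables and X a random variable in a measurable space, and let R be a version of E[Y | σ(X,A)] (the Bayes optimal regressor). Let Ŷ be any randomized predictor based on (X, A), i.e., there is a measurable f : (range of X) × {0,1} → [0,1] with P(Ŷ=1 | σ(X,A)) = f(X,A) a.s. and Ŷ conditionally independent of Y given σ(X,A). Then there exists a measurable g : [0,1] × {0,1} → [0,1] such that the predictor Y* derived from (R, A) with P(Y*=1 | σ(X,A,R)) = g(R,A) and value conditionally independent of (Y, X) given (R, A) has the same joint distribution with (A, Y) as Ŷ does; concretely, for all a, y, E[ g(R,A) · 1{A=a, Y=y} ] = P(Ŷ=1, A=a, Y=y). -/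
open MeasureTheory ProbabilityTheory
open scoped ENNReal

/-!
Let `m = σ(X, A)` and `T = (R, A)`. Since `P(Y = y ∣ m)` is `R` or `1 - R`, conditional
independence gives `P(Ŷ = 1, A = a, Y = y) = E[f(X, A) · h(T)]` for a function `h` of `T`, while
`E[g(T) · 1{A = a, Y = y}] = E[g(T) · h(T)]` because `g(T)` is `m`-measurable. So it suffices
that `g(T)` be a version of `E[f(X, A) ∣ T]`: take for `g` the Radon–Nikodym derivative of the
law of `T` under `f(X, A) · μ` with respect to the law of `T` under `μ`, which is at most `1`.
-/

section Transfer

variable {Ω γ : Type*} [MeasurableSpace Ω] [MeasurableSpace γ]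

theorem exists_integral_comp_mul_eq_integral_mul_comp (μ : Measure Ω) [IsFiniteMeasure μ]
    {T : Ω → γ} (hT : Measurable T) {F : Ω → ℝ} (hF : Measurable F)
    (hF01 : ∀ ω, F ω ∈ Set.Icc (0:ℝ) 1) :
    ∃ g : γ → ℝ, Measurable g ∧ (∀ z, g z ∈ Set.Icc (0:ℝ) 1) ∧
      ∀ h : γ → ℝ, Measurable h → ∫ ω, g (T ω) * h (T ω) ∂μ = ∫ ω, F ω * h (T ω) ∂μ := by
  set μF := μ.withDensity fun ω => ENNReal.ofReal (F ω)
  have hμF : μF ≤ μ :=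
    calc μF ≤ μ.withDensity 1 :=
          withDensity_mono (ae_of_all _ fun ω => ENNReal.ofReal_le_one.2 (hF01 ω).2)
      _ = μ := withDensity_one
  set ν := μ.map T
  set ρ := μF.map T
  have hρν : ρ ≤ ν := Measure.map_mono hμF hT
  have : IsFiniteMeasure ρ := isFiniteMeasure_of_le ν hρν
  -- `ρ.rnDeriv ν ≤ 1` holds only `ν`-a.e.; the `min` makes `g ≤ 1` hold everywhere.
  set g : γ → ℝ := fun z => min (ρ.rnDeriv ν z).toReal 1
  have hg : Measurable g := (Measure.measurable_rnDeriv ρ ν).ennreal_toReal.min measurable_const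
  have hg_ae : g =ᵐ[ν] fun z => (ρ.rnDeriv ν z).toReal := by
    filter_upwards [Measure.rnDeriv_le_one_of_le hρν] with z hz
    exact min_eq_left (ENNReal.toReal_le_of_le_ofReal zero_le_one (by simpa using hz))
  refine ⟨g, hg, fun z => ⟨le_min ENNReal.toReal_nonneg zero_le_one, min_le_right _ _⟩,
    fun h hh => ?_⟩
  calc ∫ ω, g (T ω) * h (T ω) ∂μ = ∫ z, g z * h z ∂ν :=
        (integral_map hT.aemeasurable (hg.mul hh).aestronglyMeasurable).symm
    _ = ∫ z, (ρ.rnDeriv ν z).toReal * h z ∂ν := integral_congr_ae (hg_ae.mul .rfl)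
    _ = ∫ z, h z ∂ρ := integral_toReal_rnDeriv_mul (Measure.absolutelyContinuous_of_le hρν)
    _ = ∫ ω, h (T ω) ∂μF := integral_map hT.aemeasurable hh.aestronglyMeasurable
    _ = ∫ ω, F ω * h (T ω) ∂μ := by
      rw [integral_withDensity_eq_integral_toReal_smul hF.ennreal_ofReal
        (ae_of_all _ fun _ => ENNReal.ofReal_lt_top)]
      congr with ω
      rw [ENNReal.toReal_ofReal (hF01 ω).1, smul_eq_mul]

theorem setIntegral_preimage_mul_comp_eq {μ : Measure Ω} {φ ψ : Ω → ℝ} {T : Ω → γ}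
    (hT : Measurable T)
    (hφψ : ∀ h : γ → ℝ, Measurable h → ∫ ω, φ ω * h (T ω) ∂μ = ∫ ω, ψ ω * h (T ω) ∂μ)
    {s : Set γ} (hs : MeasurableSet s) {h : γ → ℝ} (hh : Measurable h) :
    ∫ ω in T ⁻¹' s, φ ω * h (T ω) ∂μ = ∫ ω in T ⁻¹' s, ψ ω * h (T ω) ∂μ := by
  have key : ∀ χ : Ω → ℝ,
      ∫ ω in T ⁻¹' s, χ ω * h (T ω) ∂μ = ∫ ω, χ ω * s.indicator h (T ω) ∂μ := by
    intro χ
    rw [← integral_indicator (hT hs)]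
    congr with ω
    by_cases hω : T ω ∈ s <;> simp [hω]
  rw [key, key, hφψ _ (hh.indicator hs)]

end Transfer

section CondExp

variable {Ω : Type*} {m mΩ : MeasurableSpace Ω} {μ : Measure Ω}

theorem setIntegral_inter_eq_setIntegral_mul_condExp_indicator [IsFiniteMeasure μ]
    (hm : m ≤ mΩ) {s t : Set Ω} (hs : MeasurableSet[m] s) (ht : MeasurableSet t)
    {φ : Ω → ℝ} (hφm : StronglyMeasurable[m] φ) (hφ : Integrable φ μ) :
    ∫ ω in s ∩ t, φ ω ∂μ = ∫ ω in s, φ ω * μ[t.indicator (fun _ => (1:ℝ)) | m] ω ∂μ := by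
  have hφt : (fun ω => φ ω * t.indicator (fun _ => (1:ℝ)) ω) = t.indicator φ := by
    ext ω
    by_cases hω : ω ∈ t <;> simp [hω]
  have hint : Integrable (fun ω => φ ω * t.indicator (fun _ => (1:ℝ)) ω) μ := by
    rw [hφt]; exact hφ.indicator ht
  rw [← setIntegral_indicator ht, ← hφt, ← setIntegral_condExp hm hint hs]
  refine setIntegral_congr_ae (hm s hs) ?_
  filter_upwards [condExp_mul_of_stronglyMeasurable_left hφm hint
    ((integrable_const 1).indicator ht)] with ω hω _
  exact hω

theorem setIntegral_condExp_indicator_eq_measureReal [IsFiniteMeasure μ] (hm : m ≤ mΩ)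
    {s t : Set Ω} (hs : MeasurableSet[m] s) (ht : MeasurableSet t) :
    ∫ ω in s, μ[t.indicator (fun _ => (1:ℝ)) | m] ω ∂μ = μ.real (s ∩ t) := by
  rw [setIntegral_condExp hm ((integrable_const 1).indicator ht) hs, setIntegral_indicator ht,
    setIntegral_const, smul_eq_mul, mul_one]

theorem condExp_indicator_eq_of_ae_eq_condExp [IsFiniteMeasure μ] (hm : m ≤ mΩ)
    {Y : Ω → Bool} (hY : Measurable Y) {R : Ω → ℝ}
    (hR : R =ᵐ[μ] μ[fun ω => if Y ω then (1:ℝ) else 0 | m]) (y : Bool) :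
    μ[{ω | Y ω = y}.indicator (fun _ => (1:ℝ)) | m] =ᵐ[μ]
      fun ω => if y then R ω else 1 - R ω := by
  set Z : Ω → ℝ := fun ω => if Y ω then 1 else 0
  have hZ : Integrable Z μ :=
    (integrable_const 1).indicator (hY (measurableSet_singleton true)) |>.congr
      (ae_of_all _ fun ω => by cases hω : Y ω <;> simp [Z, hω])
  cases y
  · have hind : {ω | Y ω = false}.indicator (fun _ => (1:ℝ)) = (fun _ => (1:ℝ)) - Z := by
      ext ω; cases hω : Y ω <;> simp [Z, hω]
    rw [hind]
    filter_upwards [condExp_sub (integrable_const 1) hZ m, hR] with ω hω hRω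
    rw [hω, condExp_const hm, hRω]
    rfl
  · have hind : {ω | Y ω = true}.indicator (fun _ => (1:ℝ)) = Z := by
      ext ω; cases hω : Y ω <;> simp [Z, hω]
    rw [hind]
    exact hR.symm

end CondExp

/-- Let `R` be a version of `E[Y ∣ σ(X,A)]` (Bayes optimal regressor
for a binary target `Y`), and let `Ŷ` be any randomized predictor based on `(X,A)`,
i.e. `P(Ŷ=1 ∣ σ(X,A)) = f(X,A)` a.s. for a measurable `f` into `[0,1]`, with `Ŷ`
conditionally independent of `Y` given `σ(X,A)`. Then there is a measurable
`g : ℝ × {0,1} → [0,1]` such that the predictor derived from `(R,A)` with acceptance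
probability `g(R,A)` has the same joint distribution with `(A,Y)` as `Ŷ`:
`E[g(R,A) · 1{A=a, Y=y}] = P(Ŷ=1, A=a, Y=y)` for all `a, y`. -/
theorem derived_predictor_same_joint_distribution
    {Ω β : Type*} [MeasurableSpace Ω] [MeasurableSpace β]
    (μ : Measure Ω) [IsProbabilityMeasure μ]
    (Y : Ω → Bool) (X : Ω → β) (A : Ω → Bool) (R : Ω → ℝ) (Yh : Ω → Bool)
    (hY : Measurable Y) (hX : Measurable X) (hA : Measurable A) (hYh : Measurable Yh)
    (hRmeas : Measurable[pairSigma X A] R)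
    (hR : R =ᵐ[μ] μ[fun ω => if Y ω then (1:ℝ) else 0 | pairSigma X A])
    (f : β × Bool → ℝ) (hf : Measurable f) (hf01 : ∀ z, f z ∈ Set.Icc (0:ℝ) 1)
    (hYhf : (μ[Set.indicator {ω | Yh ω = true} (fun _ => (1:ℝ)) | pairSigma X A])
      =ᵐ[μ] fun ω => f (X ω, A ω))
    (hci : ∀ y : Bool,
      (μ[Set.indicator ({ω | Yh ω = true} ∩ {ω | Y ω = y}) (fun _ => (1:ℝ)) |
          pairSigma X A]) =ᵐ[μ]
        fun ω =>
          (μ[Set.indicator {ω' | Yh ω' = true} (fun _ => (1:ℝ)) | pairSigma X A]) ω *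
            (μ[Set.indicator {ω' | Y ω' = y} (fun _ => (1:ℝ)) | pairSigma X A]) ω) :
    ∃ g : ℝ × Bool → ℝ, Measurable g ∧ (∀ z, g z ∈ Set.Icc (0:ℝ) 1) ∧
      ∀ a y : Bool,
        ∫ ω in {ω | A ω = a ∧ Y ω = y}, g (R ω, A ω) ∂μ =
          (μ {ω | Yh ω = true ∧ A ω = a ∧ Y ω = y}).toReal := by
  have hXA : Measurable fun ω => (X ω, A ω) := hX.prodMk hA
  have hm : pairSigma X A ≤ ‹MeasurableSpace Ω› := hXA.comap_le
  have hAm : Measurable[pairSigma X A] A := measurable_snd.comp (Measurable.of_comap_le le_rfl)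
  have hTm : Measurable[pairSigma X A] fun ω => (R ω, A ω) := hRmeas.prodMk hAm
  have hT : Measurable fun ω => (R ω, A ω) := hTm.mono hm le_rfl
  obtain ⟨g, hg, hg01, hgf⟩ :=
    exists_integral_comp_mul_eq_integral_mul_comp μ hT (hf.comp hXA) (fun ω => hf01 _)
  refine ⟨g, hg, hg01, fun a y => ?_⟩
  have hSa : MeasurableSet[pairSigma X A] {ω | A ω = a} := hAm (measurableSet_singleton a)
  have hYy : MeasurableSet {ω | Y ω = y} := hY (measurableSet_singleton y)
  have hgT : Integrable (fun ω => g (R ω, A ω)) μ :=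
    .of_bound (hg.comp hT).aestronglyMeasurable 1 (ae_of_all _ fun ω => by
      rw [Real.norm_eq_abs, abs_of_nonneg (hg01 _).1]; exact (hg01 _).2)
  have hq := condExp_indicator_eq_of_ae_eq_condExp hm hY hR y
  calc ∫ ω in {ω | A ω = a ∧ Y ω = y}, g (R ω, A ω) ∂μ
      = ∫ ω in {ω | A ω = a}, g (R ω, A ω) *
          μ[{ω | Y ω = y}.indicator (fun _ => (1:ℝ)) | pairSigma X A] ω ∂μ :=
        setIntegral_inter_eq_setIntegral_mul_condExp_indicator hm hSa hYy
          (hg.comp hTm).stronglyMeasurable hgT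
    _ = ∫ ω in {ω | A ω = a}, g (R ω, A ω) * (if y then R ω else 1 - R ω) ∂μ :=
        setIntegral_congr_ae (hm _ hSa) (by filter_upwards [hq] with ω hω _; rw [hω])
    _ = ∫ ω in {ω | A ω = a}, f (X ω, A ω) * (if y then R ω else 1 - R ω) ∂μ :=
        setIntegral_preimage_mul_comp_eq hT hgf (measurable_snd (measurableSet_singleton a))
          (h := fun z => if y then z.1 else 1 - z.1) (by split <;> fun_prop)
    _ = ∫ ω in {ω | A ω = a}, μ[({ω | Yh ω = true} ∩ {ω | Y ω = y}).indicator
          (fun _ => (1:ℝ)) | pairSigma X A] ω ∂μ :=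
        setIntegral_congr_ae (hm _ hSa) (by
          filter_upwards [hYhf, hq, hci y] with ω hYhω hqω hciω _
          rw [hciω, hYhω, hqω])
    _ = (μ {ω | Yh ω = true ∧ A ω = a ∧ Y ω = y}).toReal := by
      rw [setIntegral_condExp_indicator_eq_measureReal hm hSa
        (t := {ω | Yh ω = true} ∩ {ω | Y ω = y}) ((hYh (measurableSet_singleton true)).inter hYy),
        Measure.real]
      congr 2
      ext ω
      simp only [Set.mem_inter_iff, Set.mem_ofPred_eq]
      tauto
end

section
/- Let Y, A be {0,1}-valued random variables, X a random variable in a measurable space, R a version of E[Y | σ(X,A)], and ℓ : {0,1}×{0,1} → ℝ a loss function. Let C be any oblivious property, i.e., a predicate on joint distributions of triples (predictor, A, Y) of {0,1}-valued random variables. Then the infimum of E[ℓ(Ŷ, Y)] over all randomized predictors Ŷ based on (X, A) whose joint law with (A, Y) satisfies C equals the infimum of E[ℓ(Y*, Y)] over all predictors Y* derived from (R, A) whose joint law with (A, Y) satisfies C. In particular, if an optimal C-satisfying predictor exists, there is one derived from (R, A) alone. -/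
/-!
Replacing a predictor `p = f(X, A)` by a version `g(R, A)` of `E[p ∣ R, A]` changes neither the
masses `P(Ŷ = 1, A = a, Y = y)` nor the expected loss. Indeed, because `R = E[Y ∣ X, A]` and `p` is
`σ(X, A)`-measurable, the mass of the cell `{A = a, Y = y}` is `E[p · φ(R, A)]` for an explicit `φ`,
which only depends on `E[p ∣ R, A]`; and the expected loss is affine in these masses. Conversely,
every `g(R, A)` is `σ(X, A)`-measurable, hence equal to some `f(X, A)` by the Doob–Dynkin lemma.
So both classes of predictors realise the same joint laws with the same losses.
-/

open MeasureTheory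

theorem Measurable.exists_Icc_valued_comp_eq {Ω γ : Type*} [MeasurableSpace γ] {T : Ω → γ}
    {q : Ω → ℝ} (hq : Measurable[MeasurableSpace.comap T inferInstance] q) :
    ∃ g : γ → ℝ, Measurable g ∧ (∀ z, g z ∈ Set.Icc (0:ℝ) 1) ∧
      ∀ ω, q ω ∈ Set.Icc (0:ℝ) 1 → g (T ω) = q ω := by
  obtain ⟨h, hh, rfl⟩ := hq.exists_eq_measurable_comp
  refine ⟨fun z => Set.projIcc 0 1 zero_le_one (h z),
    (continuous_subtype_val.comp (continuous_projIcc (h := zero_le_one))).measurable.comp hh,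
    fun z => Subtype.prop _, fun ω hω => ?_⟩
  exact congrArg Subtype.val (Set.projIcc_of_mem _ hω)

section CondExp

variable {Ω : Type*} {m mΩ : MeasurableSpace Ω} {μ : Measure Ω}

theorem ae_mem_Icc_condExp [IsFiniteMeasure μ] (hm : m ≤ mΩ) {f : Ω → ℝ} (hf : Integrable f μ)
    (hf01 : ∀ᵐ ω ∂μ, f ω ∈ Set.Icc (0:ℝ) 1) : ∀ᵐ ω ∂μ, μ[f | m] ω ∈ Set.Icc (0:ℝ) 1 := by
  have h0 : 0 ≤ᵐ[μ] μ[f | m] := condExp_nonneg (hf01.mono fun ω h => h.1)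
  have h1 : μ[f | m] ≤ᵐ[μ] μ[fun _ => (1:ℝ) | m] :=
    condExp_mono hf (integrable_const 1) (hf01.mono fun ω h => h.2)
  rw [condExp_const hm] at h1
  filter_upwards [h0, h1] with ω h0 h1 using ⟨h0, h1⟩

theorem integrable_of_mem_Icc [IsFiniteMeasure μ] {f : Ω → ℝ} (hf : AEStronglyMeasurable f μ)
    (hf01 : ∀ ω, f ω ∈ Set.Icc (0:ℝ) 1) : Integrable f μ :=
  .of_bound hf 1 (ae_of_all _ fun ω => by rw [Real.norm_of_nonneg (hf01 ω).1]; exact (hf01 ω).2)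

theorem integral_mul_condExp (hm : m ≤ mΩ) [SigmaFinite (μ.trim hm)] {v f : Ω → ℝ}
    (hv : StronglyMeasurable[m] v) (hvf : Integrable (v * f) μ) (hf : Integrable f μ) :
    ∫ ω, v ω * μ[f | m] ω ∂μ = ∫ ω, v ω * f ω ∂μ :=
  calc ∫ ω, v ω * μ[f | m] ω ∂μ = ∫ ω, μ[v * f | m] ω ∂μ :=
        (integral_congr_ae (condExp_mul_of_stronglyMeasurable_left hv hvf hf)).symm
    _ = ∫ ω, v ω * f ω ∂μ := integral_condExp hm

end CondExp

section Fairness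

variable {Ω : Type*} {m mΩ : MeasurableSpace Ω} {μ : Measure Ω} {A Y : Ω → Bool} {R : Ω → ℝ}

variable (μ A Y) in
noncomputable def jointMass (p : Ω → ℝ) (a y : Bool) : ℝ :=
  ∫ ω in {ω | A ω = a ∧ Y ω = y}, p ω ∂μ

variable (μ Y) in
noncomputable def expectedLoss (L : Bool → Bool → ℝ) (p : Ω → ℝ) : ℝ :=
  ∫ ω, (p ω * L true (Y ω) + (1 - p ω) * L false (Y ω)) ∂μ

theorem measurable_ite_eq {β : Type*} [MeasurableSpace β] [DiscreteMeasurableSpace β]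
    [DecidableEq β] {Z : Ω → β} (hZ : Measurable Z) (b : β) :
    Measurable fun ω => if Z ω = b then (1:ℝ) else 0 :=
  (Measurable.of_discrete (f := fun c : β => if c = b then (1:ℝ) else 0)).comp hZ

theorem norm_ite_eq_le {β : Type*} [DecidableEq β] (Z : Ω → β) (b : β) (ω : Ω) :
    ‖if Z ω = b then (1:ℝ) else 0‖ ≤ 1 := by
  split_ifs <;> simp

theorem integrable_ite_eq [IsFiniteMeasure μ] {β : Type*} [MeasurableSpace β]
    [DiscreteMeasurableSpace β] [DecidableEq β] {Z : Ω → β} (hZ : Measurable Z) (b : β) :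
    Integrable (fun ω => if Z ω = b then (1:ℝ) else 0) μ :=
  .of_bound (measurable_ite_eq hZ b).aestronglyMeasurable 1 (ae_of_all _ (norm_ite_eq_le Z b))

theorem jointMass_eq_integral (hA : Measurable A) (hY : Measurable Y) (p : Ω → ℝ) (a y : Bool) :
    jointMass μ A Y p a y =
      ∫ ω, p ω * ((if A ω = a then 1 else 0) * (if Y ω = y then 1 else 0)) ∂μ := by
  have hs : MeasurableSet {ω | A ω = a ∧ Y ω = y} :=
    (hA (measurableSet_singleton a)).inter (hY (measurableSet_singleton y))
  rw [jointMass, ← integral_indicator hs]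
  congr 1 with ω
  by_cases ha : A ω = a <;> by_cases hy : Y ω = y <;> simp [ha, hy]

theorem expectedLoss_eq_sum_jointMass [IsFiniteMeasure μ] (hA : Measurable A) (hY : Measurable Y)
    {p : Ω → ℝ} (hp : Integrable p μ) (L : Bool → Bool → ℝ) :
    expectedLoss μ Y L p = ∑ c : Bool × Bool, (L true c.2 - L false c.2) * jointMass μ A Y p c.1 c.2
      + ∫ ω, L false (Y ω) ∂μ := by
  have hcell : ∀ c : Bool × Bool, Integrable (fun ω => (L true c.2 - L false c.2) *
      (p ω * ((if A ω = c.1 then 1 else 0) * (if Y ω = c.2 then 1 else 0)))) μ := by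
    intro c
    have hcm := (measurable_ite_eq hA c.1).mul (measurable_ite_eq hY c.2)
    refine (hp.mul_bdd hcm.aestronglyMeasurable (c := 1) (ae_of_all _ fun ω => ?_)).const_mul _
    rw [Pi.mul_apply, norm_mul]
    exact mul_le_one₀ (norm_ite_eq_le A _ ω) (norm_nonneg _) (norm_ite_eq_le Y _ ω)
  have hLY : Integrable (fun ω => L false (Y ω)) μ :=
    .of_bound ((Measurable.of_discrete (f := L false)).comp hY).aestronglyMeasurable
      (‖L false true‖ + ‖L false false‖) (ae_of_all _ fun ω => by cases Y ω <;> simp)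
  simp_rw [jointMass_eq_integral hA hY, ← integral_const_mul]
  rw [← integral_finsetSum _ fun c _ => hcell c,
    ← integral_add (integrable_finsetSum _ fun c _ => hcell c) hLY]
  refine integral_congr_ae (ae_of_all _ fun ω => ?_)
  cases A ω <;> cases Y ω <;> simp [Fintype.sum_prod_type] <;> ring

-- `P(A = a, Y = y ∣ R = r, A = a')` at `z = (r, a')`, when `R = E[Y ∣ m]` and `A` is
-- `m`-measurable.
def cellCondProb (a y : Bool) (z : ℝ × Bool) : ℝ :=
  (if z.2 = a then 1 else 0) * (if y then z.1 else 1 - z.1)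

theorem measurable_cellCondProb (a y : Bool) : Measurable (cellCondProb a y) := by
  refine (measurable_ite_eq measurable_snd a).mul ?_
  cases y
  · exact measurable_const.sub measurable_fst
  · exact measurable_fst

theorem condExp_ite_eq_ae_eq [IsFiniteMeasure μ] (hm : m ≤ mΩ) (hY : Measurable Y)
    (hR : R =ᵐ[μ] μ[fun ω => if Y ω then (1:ℝ) else 0 | m]) (y : Bool) :
    μ[fun ω => if Y ω = y then (1:ℝ) else 0 | m] =ᵐ[μ] fun ω => if y then R ω else 1 - R ω := by
  cases y
  · have hsub : (fun ω => if Y ω = false then (1:ℝ) else 0) =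
        (fun _ => (1:ℝ)) - fun ω => if Y ω then (1:ℝ) else 0 := by
      ext ω; cases h : Y ω <;> simp [h]
    rw [hsub]
    filter_upwards [condExp_sub (integrable_const 1) (integrable_ite_eq hY true) m, hR]
      with ω hω hRω
    simp [hω, condExp_const hm, hRω]
  · simpa using hR.symm

theorem jointMass_eq_integral_cellCondProb [IsFiniteMeasure μ] (hm : m ≤ mΩ) (hAm : Measurable[m] A)
    (hY : Measurable Y) (hR : R =ᵐ[μ] μ[fun ω => if Y ω then (1:ℝ) else 0 | m]) {u : Ω → ℝ}
    (hum : StronglyMeasurable[m] u) (hu : Integrable u μ) (a y : Bool) :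
    jointMass μ A Y u a y = ∫ ω, cellCondProb a y (R ω, A ω) * u ω ∂μ := by
  have hA : Measurable A := hAm.mono hm le_rfl
  have hv : StronglyMeasurable[m] fun ω => (if A ω = a then (1:ℝ) else 0) * u ω :=
    (measurable_ite_eq hAm a).stronglyMeasurable.mul hum
  have hvi : Integrable (fun ω => (if A ω = a then (1:ℝ) else 0) * u ω) μ :=
    hu.bdd_mul (measurable_ite_eq hA a).aestronglyMeasurable (ae_of_all _ (norm_ite_eq_le A a))
  calc jointMass μ A Y u a y
      = ∫ ω, ((if A ω = a then 1 else 0) * u ω) * (if Y ω = y then 1 else 0) ∂μ := by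
        rw [jointMass_eq_integral hA hY]; congr 1 with ω; ring
    _ = ∫ ω, ((if A ω = a then 1 else 0) * u ω) *
          μ[fun ω => if Y ω = y then (1:ℝ) else 0 | m] ω ∂μ :=
        (integral_mul_condExp hm hv (hvi.mul_bdd (measurable_ite_eq hY y).aestronglyMeasurable
          (ae_of_all _ (norm_ite_eq_le Y y))) (integrable_ite_eq hY y)).symm
    _ = ∫ ω, cellCondProb a y (R ω, A ω) * u ω ∂μ := by
        refine integral_congr_ae ((condExp_ite_eq_ae_eq hm hY hR y).mono fun ω hω => ?_)
        simp only [hω, cellCondProb]; ring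

theorem integrable_cellCondProb_comp [IsFiniteMeasure μ] (hA : Measurable A) (hR : Integrable R μ)
    (a y : Bool) : Integrable (fun ω => cellCondProb a y (R ω, A ω)) μ := by
  have hr : Integrable (fun ω => if y then R ω else 1 - R ω) μ := by
    cases y
    · exact (integrable_const 1).sub hR
    · exact hR
  exact hr.bdd_mul (measurable_ite_eq hA a).aestronglyMeasurable (ae_of_all _ (norm_ite_eq_le A a))

-- `g (R, A)` is a version of `E[p ∣ R, A]`, which sees the cells `{A = a, Y = y}` as `p` does.
theorem exists_derived_jointMass_eq [IsFiniteMeasure μ] (hm : m ≤ mΩ) (hAm : Measurable[m] A)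
    (hRm : Measurable[m] R) (hY : Measurable Y)
    (hR : R =ᵐ[μ] μ[fun ω => if Y ω then (1:ℝ) else 0 | m]) {p : Ω → ℝ}
    (hpm : StronglyMeasurable[m] p) (hp01 : ∀ ω, p ω ∈ Set.Icc (0:ℝ) 1) (L : Bool → Bool → ℝ) :
    ∃ g : ℝ × Bool → ℝ, Measurable g ∧ (∀ z, g z ∈ Set.Icc (0:ℝ) 1) ∧
      jointMass μ A Y (fun ω => g (R ω, A ω)) = jointMass μ A Y p ∧
      expectedLoss μ Y L (fun ω => g (R ω, A ω)) = expectedLoss μ Y L p := by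
  have hA : Measurable A := hAm.mono hm le_rfl
  have hTm : Measurable[m] fun ω => (R ω, A ω) := hRm.prodMk hAm
  have hT : Measurable fun ω => (R ω, A ω) := hTm.mono hm le_rfl
  have hpi : Integrable p μ := integrable_of_mem_Icc (hpm.mono hm).aestronglyMeasurable hp01
  obtain ⟨g, hg, hg01, hgq⟩ := Measurable.exists_Icc_valued_comp_eq
    (stronglyMeasurable_condExp (m := pairSigma R A) (f := p) (μ := μ)).measurable
  have hg_ae : (fun ω => g (R ω, A ω)) =ᵐ[μ] μ[p | pairSigma R A] :=
    (ae_mem_Icc_condExp hT.comap_le hpi (ae_of_all _ hp01)).mono fun ω hω => hgq ω hω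
  have hgm : StronglyMeasurable[m] fun ω => g (R ω, A ω) := (hg.comp hTm).stronglyMeasurable
  have hgi : Integrable (fun ω => g (R ω, A ω)) μ :=
    integrable_of_mem_Icc (hg.comp hT).aestronglyMeasurable fun ω => hg01 _
  have hJ : jointMass μ A Y (fun ω => g (R ω, A ω)) = jointMass μ A Y p := by
    ext a y
    rw [jointMass_eq_integral_cellCondProb hm hAm hY hR hgm hgi,
      jointMass_eq_integral_cellCondProb hm hAm hY hR hpm hpi]
    have hRi : Integrable R μ := integrable_condExp.congr hR.symm
    calc ∫ ω, cellCondProb a y (R ω, A ω) * g (R ω, A ω) ∂μ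
        = ∫ ω, cellCondProb a y (R ω, A ω) * μ[p | pairSigma R A] ω ∂μ :=
          integral_congr_ae (hg_ae.mono fun ω hω => congrArg (cellCondProb a y (R ω, A ω) * ·) hω)
      _ = ∫ ω, cellCondProb a y (R ω, A ω) * p ω ∂μ :=
          integral_mul_condExp hT.comap_le
            ((measurable_cellCondProb a y).comp (comap_measurable _)).stronglyMeasurable
            ((integrable_cellCondProb_comp hA hRi a y).mul_bdd hpi.aestronglyMeasurable
              (ae_of_all _ fun ω => by rw [Real.norm_of_nonneg (hp01 ω).1]; exact (hp01 ω).2))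
            hpi
  refine ⟨g, hg, hg01, hJ, ?_⟩
  rw [expectedLoss_eq_sum_jointMass hA hY hgi, expectedLoss_eq_sum_jointMass hA hY hpi, hJ]

end Fairness

-- An oblivious property is a predicate `C` on `J p a y = P(Ŷ = 1, A = a, Y = y)`, where `p` is the
-- acceptance probability of `Ŷ`; with `μ`, `A`, `Y` fixed, `J p` is the joint law of `(Ŷ, A, Y)`.
/-- Let `R` be a version of `E[Y ∣ σ(X,A)]`, let `L` be a loss and `C`
any oblivious property, i.e. a predicate depending only on the joint distribution of
(predictor, A, Y); since `μ`, `A`, `Y` are fixed, that joint distribution is encoded by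
the function `J p a y = P(predictor = 1, A = a, Y = y)` where `p : Ω → [0,1]` is the
acceptance probability of the randomized predictor. Then the infimum of the expected
loss over randomized predictors `f(X,A)` whose joint law satisfies `C` equals the
infimum over predictors `g(R,A)` derived from `(R,A)` satisfying `C`; in particular, if
an optimal `C`-satisfying predictor based on `(X,A)` exists, then there is one derived
from `(R,A)` alone. -/
theorem oblivious_optimal_derived_from_bayes_regressor
    {Ω β : Type*} [MeasurableSpace Ω] [MeasurableSpace β]
    (μ : Measure Ω) [IsProbabilityMeasure μ]
    (Y : Ω → Bool) (X : Ω → β) (A : Ω → Bool) (R : Ω → ℝ)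
    (hY : Measurable Y) (hX : Measurable X) (hA : Measurable A)
    (hRmeas : Measurable[pairSigma X A] R)
    (hR : R =ᵐ[μ] μ[fun ω => if Y ω then (1:ℝ) else 0 | pairSigma X A])
    (L : Bool → Bool → ℝ)
    (C : (Bool → Bool → ℝ) → Prop) :
    let J : (Ω → ℝ) → Bool → Bool → ℝ := fun p a y =>
      ∫ ω in {ω | A ω = a ∧ Y ω = y}, p ω ∂μ
    let loss : (Ω → ℝ) → ℝ := fun p =>
      ∫ ω, (p ω * L true (Y ω) + (1 - p ω) * L false (Y ω)) ∂μ
    (sInf {l : ℝ | ∃ f : β × Bool → ℝ, Measurable f ∧ (∀ z, f z ∈ Set.Icc (0:ℝ) 1) ∧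
          C (J (fun ω => f (X ω, A ω))) ∧ l = loss (fun ω => f (X ω, A ω))} =
        sInf {l : ℝ | ∃ g : ℝ × Bool → ℝ, Measurable g ∧ (∀ z, g z ∈ Set.Icc (0:ℝ) 1) ∧
          C (J (fun ω => g (R ω, A ω))) ∧ l = loss (fun ω => g (R ω, A ω))}) ∧
      ((∃ f : β × Bool → ℝ, Measurable f ∧ (∀ z, f z ∈ Set.Icc (0:ℝ) 1) ∧
          C (J (fun ω => f (X ω, A ω))) ∧
          ∀ f' : β × Bool → ℝ, Measurable f' → (∀ z, f' z ∈ Set.Icc (0:ℝ) 1) →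
            C (J (fun ω => f' (X ω, A ω))) →
            loss (fun ω => f (X ω, A ω)) ≤ loss (fun ω => f' (X ω, A ω))) →
        ∃ g : ℝ × Bool → ℝ, Measurable g ∧ (∀ z, g z ∈ Set.Icc (0:ℝ) 1) ∧
          C (J (fun ω => g (R ω, A ω))) ∧
          ∀ f' : β × Bool → ℝ, Measurable f' → (∀ z, f' z ∈ Set.Icc (0:ℝ) 1) →
            C (J (fun ω => f' (X ω, A ω))) →
            loss (fun ω => g (R ω, A ω)) ≤ loss (fun ω => f' (X ω, A ω))) := by
  intro J loss
  have hXA : Measurable fun ω => (X ω, A ω) := hX.prodMk hA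
  have hAm : Measurable[pairSigma X A] A := measurable_snd.comp (comap_measurable _)
  have derived : ∀ f : β × Bool → ℝ, Measurable f → (∀ z, f z ∈ Set.Icc (0:ℝ) 1) →
      ∃ g : ℝ × Bool → ℝ, Measurable g ∧ (∀ z, g z ∈ Set.Icc (0:ℝ) 1) ∧
        J (fun ω => g (R ω, A ω)) = J (fun ω => f (X ω, A ω)) ∧
        loss (fun ω => g (R ω, A ω)) = loss (fun ω => f (X ω, A ω)) := fun f hf hf01 =>
    exists_derived_jointMass_eq hXA.comap_le hAm hRmeas hY hR
      (hf.comp (comap_measurable _)).stronglyMeasurable (fun _ => hf01 _) L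
  have based : ∀ g : ℝ × Bool → ℝ, Measurable g → (∀ z, g z ∈ Set.Icc (0:ℝ) 1) →
      ∃ f : β × Bool → ℝ, Measurable f ∧ (∀ z, f z ∈ Set.Icc (0:ℝ) 1) ∧
        (fun ω => f (X ω, A ω)) = fun ω => g (R ω, A ω) := fun g hg hg01 => by
    obtain ⟨f, hf, hf01, hfg⟩ := (hg.comp (hRmeas.prodMk hAm)).exists_Icc_valued_comp_eq
    exact ⟨f, hf, hf01, funext fun ω => hfg ω (hg01 _)⟩
  refine ⟨congrArg sInf (Set.ext fun l => ⟨?_, ?_⟩), ?_⟩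
  · rintro ⟨f, hf, hf01, hC, rfl⟩
    obtain ⟨g, hg, hg01, hJ, hloss⟩ := derived f hf hf01
    exact ⟨g, hg, hg01, hJ ▸ hC, hloss.symm⟩
  · rintro ⟨g, hg, hg01, hC, rfl⟩
    obtain ⟨f, hf, hf01, hfg⟩ := based g hg hg01
    exact ⟨f, hf, hf01, hfg ▸ hC, hfg ▸ rfl⟩
  · rintro ⟨f, hf, hf01, hC, hopt⟩
    obtain ⟨g, hg, hg01, hJ, hloss⟩ := derived f hf hf01
    exact ⟨g, hg, hg01, hJ ▸ hC, fun f' hf' hf'01 hC' => hloss ▸ hopt f' hf' hf'01 hC'⟩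
end

section
/- Let σ(t) = 1/(1+e^{−t}) and φ(x) = e^{−x²/2}/√(2π). Then for all real a and x: σ(2a)·φ(x−a−1) / ( σ(2a)·φ(x−a−1) + σ(−2a)·φ(x−a+1) ) = σ(2x). In particular, the right-hand side does not depend on a: in the model where X₃ given A=a is the two-component Gaussian mixture N(a+1,1) with weight σ(2a) and N(a−1,1) with weight σ(−2a), the posterior probability P(Y=1 | X₃=x, A=a) induced by Bayes' rule (treating the first mixture component as Y=1) equals σ(2x) for every a, i.e., the score R* = X₃ has matching conditional frequencies. -/
/-!
Bayes' rule in log-odds form: the posterior log-odds are the prior log-odds `2a` plus the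
log-likelihood ratio of the two unit-variance Gaussians, which is linear in `x`, namely `2(x - a)`.
The two contributions of `a` cancel, leaving `2x`.
-/

open Real ProbabilityTheory NNReal

lemma Real.div_add_mul_rexp_neg_eq_sigmoid {p : ℝ} (hp : p ≠ 0) (t : ℝ) :
    p / (p + p * exp (-t)) = sigmoid t := by
  rw [sigmoid_def, ← mul_one_add, div_mul_cancel_left₀ hp]

namespace ProbabilityTheory

lemma gaussianPDFReal_eq_mul_rexp (μ₁ μ₂ : ℝ) (v : ℝ≥0) (x : ℝ) :
    gaussianPDFReal μ₂ v x =
      gaussianPDFReal μ₁ v x * exp (-((μ₁ - μ₂) * (x - (μ₁ + μ₂) / 2) / v)) := by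
  simp only [gaussianPDFReal, mul_assoc, ← exp_add]
  ring_nf

lemma sigmoid_mul_gaussianPDFReal_div (c μ₁ μ₂ : ℝ) {v : ℝ≥0} (hv : v ≠ 0) (x : ℝ) :
    sigmoid c * gaussianPDFReal μ₁ v x /
        (sigmoid c * gaussianPDFReal μ₁ v x + sigmoid (-c) * gaussianPDFReal μ₂ v x) =
      sigmoid (c + (μ₁ - μ₂) * (x - (μ₁ + μ₂) / 2) / v) := by
  set p := sigmoid c * gaussianPDFReal μ₁ v x
  have hp : p ≠ 0 := (mul_pos (sigmoid_pos c) (gaussianPDFReal_pos μ₁ v x hv)).ne'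
  have odds : sigmoid (-c) * gaussianPDFReal μ₂ v x =
      p * exp (-(c + (μ₁ - μ₂) * (x - (μ₁ + μ₂) / 2) / v)) := by
    rw [← sigmoid_mul_rexp_neg, gaussianPDFReal_eq_mul_rexp μ₁ μ₂, neg_add, exp_add]
    ring
  rw [odds, div_add_mul_rexp_neg_eq_sigmoid hp]

end ProbabilityTheory

/-- With `σ(t) = 1/(1+e^{-t})` and `φ(x) = e^{-x²/2}/√(2π)`, for all
real `a`, `x`:
`σ(2a)·φ(x−a−1) / (σ(2a)·φ(x−a−1) + σ(−2a)·φ(x−a+1)) = σ(2x)`.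
In particular the right-hand side does not depend on `a`: in Scenario II the posterior
`P(Y=1 ∣ X₃=x, A=a)` equals `σ(2x)` for every `a`, i.e. the score `R* = X₃` has
matching conditional frequencies. -/
theorem scenario_II_posterior (a x : ℝ) :
    (1 / (1 + Real.exp (-(2 * a)))) *
        (Real.exp (-(x - a - 1) ^ 2 / 2) / Real.sqrt (2 * Real.pi)) /
      ((1 / (1 + Real.exp (-(2 * a)))) *
          (Real.exp (-(x - a - 1) ^ 2 / 2) / Real.sqrt (2 * Real.pi)) +
        (1 / (1 + Real.exp (2 * a))) *
          (Real.exp (-(x - a + 1) ^ 2 / 2) / Real.sqrt (2 * Real.pi))) =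
    1 / (1 + Real.exp (-(2 * x))) := by
  have hσ (t : ℝ) : 1 / (1 + exp (-t)) = sigmoid t := by rw [one_div, sigmoid_def]
  have hφ (μ : ℝ) : exp (-(x - μ) ^ 2 / 2) / √(2 * π) = gaussianPDFReal μ 1 x := by
    simp [gaussianPDFReal, div_eq_inv_mul]
  calc _ = sigmoid (2 * a) * gaussianPDFReal (a + 1) 1 x /
        (sigmoid (2 * a) * gaussianPDFReal (a + 1) 1 x +
          sigmoid (-(2 * a)) * gaussianPDFReal (a - 1) 1 x) := by
        rw [← hσ, ← hσ, neg_neg, ← hφ, ← hφ, sub_sub, sub_add]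
    _ = sigmoid (2 * a + (a + 1 - (a - 1)) * (x - (a + 1 + (a - 1)) / 2) / (1 : ℝ≥0)) :=
        sigmoid_mul_gaussianPDFReal_div _ _ _ one_ne_zero x
    _ = 1 / (1 + exp (-(2 * x))) := by rw [hσ]; congr 1; push_cast; ring
end
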